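/- arXiv:2410.18706 — 3 statements merged into one kernel-verified Lean document; each statement's English description precedes it below -/
import Mathlib

section
/- For every l ∈ ℕ, the map P ↦ d₁(P) from ℂ[X₀,X₁]_l ∖ {0} to ℕ is lower semicontinuous with respect to the natural topology of the finite-dimensional complex vector space ℂ[X₀,X₁]_l: for every n ∈ ℕ, the set {P ∈ ℂ[X₀,X₁]_l ∖ {0} : d₁(P) ≥ n} is open in ℂ[X₀,X₁]_l ∖ {0}. -/
/-!
Common definitions: the apolar action of `ℂ[X₀,X₁]` on itself
(`Q • P := Q(∂/∂X₀, ∂/∂X₁)(P)`), the apolar ideal `Ann(P)` and its homogeneous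
components, the cokernel `C_P^d` of `Q ↦ Q • P : ℂ[X₀,X₁]_d → ℂ[X₀,X₁]_{l-d}`,
the invariant `d₁(P)` and the Waring rank.
-/

open MvPolynomial

noncomputable section

/-- The partial derivative `∂/∂Xᵢ` as a `ℂ`-linear endomorphism of `ℂ[X₀,X₁]`. -/
def pd (i : Fin 2) : Module.End ℂ (MvPolynomial (Fin 2) ℂ) := (pderiv (R := ℂ) i).toLinearMap

lemma pd_comm : Commute (pd 0) (pd 1) := by
  apply LinearMap.ext
  intro P
  induction P using MvPolynomial.induction_on' with
  | monomial s a =>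
      simp [pd, Module.End.mul_apply, pderiv_monomial]
      rw [tsub_right_comm, mul_right_comm]
  | add p q hp hq => simp_all [Module.End.mul_apply, map_add]

/-- The endomorphism `∂₀^{m 0} ∘ ∂₁^{m 1}` of `ℂ[X₀,X₁]`, as a monoid homomorphism in the
exponent `m`. -/
def derivMonomialHom :
    Multiplicative (Fin 2 →₀ ℕ) →* Module.End ℂ (MvPolynomial (Fin 2) ℂ) where
  toFun m := pd 0 ^ (Multiplicative.toAdd m 0) * pd 1 ^ (Multiplicative.toAdd m 1)
  map_one' := by simp
  map_mul' a b := by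
    simp only [toAdd_mul, Finsupp.add_apply, pow_add]
    exact (Commute.pow_pow pd_comm _ _).mul_mul_mul_comm _ _

/-- The representation of `ℂ[X₀,X₁]` by constant-coefficient differential operators:
`diffOp Q = Q(∂/∂X₀, ∂/∂X₁)`.  It is the morphism of `ℂ`-algebras sending `X i` to
`∂/∂Xᵢ`. -/
def diffOp : MvPolynomial (Fin 2) ℂ →ₐ[ℂ] Module.End ℂ (MvPolynomial (Fin 2) ℂ) :=
  AddMonoidAlgebra.lift ℂ _ (Fin 2 →₀ ℕ) derivMonomialHom

/-- The apolar action `Q • P := Q(∂/∂X₀, ∂/∂X₁)(P)`. -/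
def apolar (Q P : MvPolynomial (Fin 2) ℂ) : MvPolynomial (Fin 2) ℂ := diffOp Q P

/-- For fixed `P`, the map `Q ↦ Q • P` is `ℂ`-linear in `Q`. -/
def apolarLM (P : MvPolynomial (Fin 2) ℂ) :
    MvPolynomial (Fin 2) ℂ →ₗ[ℂ] MvPolynomial (Fin 2) ℂ :=
  (LinearMap.applyₗ P).comp diffOp.toLinearMap

lemma apolarLM_apply (P Q : MvPolynomial (Fin 2) ℂ) : apolarLM P Q = apolar Q P := rfl

/-- The apolar ideal `Ann(P) = {Q | Q • P = 0}`. -/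
def annIdeal (P : MvPolynomial (Fin 2) ℂ) : Ideal (MvPolynomial (Fin 2) ℂ) where
  carrier := {Q | apolar Q P = 0}
  zero_mem' := by simp [apolar]
  add_mem' := by
    intro a b ha hb
    simp only [Set.mem_setOf_eq, apolar, map_add, LinearMap.add_apply] at *
    rw [ha, hb, add_zero]
  smul_mem' := by
    intro c Q hQ
    simp only [Set.mem_setOf_eq, smul_eq_mul, apolar, map_mul, Module.End.mul_apply] at *
    rw [hQ, map_zero]

/-- The degree-`d` homogeneous component `Ann(P)_d` of the apolar ideal of `P`. -/
def annComp (P : MvPolynomial (Fin 2) ℂ) (d : ℕ) :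
    Submodule ℂ (MvPolynomial (Fin 2) ℂ) :=
  homogeneousSubmodule (Fin 2) ℂ d ⊓ LinearMap.ker (apolarLM P)

/-- The image of `ℂ[X₀,X₁]_d` under `Q ↦ Q • P`, viewed as a subspace of `ℂ[X₀,X₁]_{l-d}`
(for `P` homogeneous of degree `l` and `d ≤ l` the image is indeed contained in
`ℂ[X₀,X₁]_{l-d}`). -/
def apolarImage (P : MvPolynomial (Fin 2) ℂ) (l d : ℕ) :
    Submodule ℂ (homogeneousSubmodule (Fin 2) ℂ (l - d)) :=
  Submodule.comap (homogeneousSubmodule (Fin 2) ℂ (l - d)).subtype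
    (Submodule.map (apolarLM P) (homogeneousSubmodule (Fin 2) ℂ d))

/-- `C_P^d`: the cokernel of the `ℂ`-linear map `ℂ[X₀,X₁]_d → ℂ[X₀,X₁]_{l-d}`, `Q ↦ Q • P`. -/
abbrev ApolarCoker (P : MvPolynomial (Fin 2) ℂ) (l d : ℕ) :=
  (homogeneousSubmodule (Fin 2) ℂ (l - d)) ⧸ apolarImage P l d

/-- `d₁(P)`: the minimal degree of a nonzero homogeneous polynomial in `Ann(P)`. -/
def d1 (P : MvPolynomial (Fin 2) ℂ) : ℕ :=
  sInf {d | ∃ Q : MvPolynomial (Fin 2) ℂ, Q ≠ 0 ∧ Q.IsHomogeneous d ∧ apolar Q P = 0}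

/-- The Waring rank of a binary form `P` of degree `l`: the least `r` such that `P` is a sum
of `r` `l`-th powers of linear forms. -/
def waringRank (l : ℕ) (P : MvPolynomial (Fin 2) ℂ) : ℕ :=
  sInf {r | ∃ lam : Fin r → MvPolynomial (Fin 2) ℂ,
    (∀ i, (lam i).IsHomogeneous 1) ∧ P = ∑ i, lam i ^ l}

end

/-- The natural topology on `ℂ[X₀,X₁]`: the topology of coefficientwise convergence.  On each
finite-dimensional subspace (such as the space of forms of a fixed degree) it coincides with
the natural topology of a finite-dimensional complex vector space. -/
noncomputable instance : TopologicalSpace (MvPolynomial (Fin 2) ℂ) :=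
  TopologicalSpace.induced
    (fun P (m : Fin 2 →₀ ℕ) => MvPolynomial.coeff m P) Pi.topologicalSpace

/-!
`n ≤ d₁(P)` exactly when, for every `d < n`, the catalecticant `Q ↦ Q • P` on forms of degree
`d` is injective. The catalecticant depends linearly on `P`, and injectivity of a linear map out of
a finite-dimensional space is an open condition.
-/

open Topology

section InjectiveOpen

variable {𝕜 V E F : Type*} [NontriviallyNormedField 𝕜] [CompleteSpace 𝕜]
  [AddCommGroup V] [Module 𝕜 V] [TopologicalSpace V] [IsTopologicalAddGroup V]
  [ContinuousSMul 𝕜 V] [T2Space V] [FiniteDimensional 𝕜 V]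
  [AddCommGroup E] [Module 𝕜 E] [FiniteDimensional 𝕜 E] [AddCommGroup F] [Module 𝕜 F]

/-- `B v` is injective iff `g ∘ B v` is invertible for some `g`, and `v ↦ det (g ∘ B v)` is a
polynomial, hence continuous, function on `V`. -/
theorem LinearMap.isOpen_setOf_injective_apply (B : V →ₗ[𝕜] E →ₗ[𝕜] F) :
    IsOpen {v | Function.Injective (B v)} := by
  have hunion : {v | Function.Injective (B v)} =
      ⋃ g : F →ₗ[𝕜] E, {v | LinearMap.det (g ∘ₗ B v) ≠ 0} := by
    ext v
    simp only [Set.mem_ofPred_eq, Set.mem_iUnion]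
    constructor
    · intro hinj
      obtain ⟨g, hg⟩ := (B v).exists_leftInverse_of_injective (LinearMap.ker_eq_bot.mpr hinj)
      exact ⟨g, by simp [hg]⟩
    · rintro ⟨g, hg⟩
      have hunit : IsUnit (g ∘ₗ B v) :=
        (LinearMap.isUnit_iff_isUnit_det _).mpr (isUnit_iff_ne_zero.mpr hg)
      exact Function.Injective.of_comp (f := g) ((Module.End.isUnit_iff _).mp hunit).injective
  rw [hunion]
  refine isOpen_iUnion fun g => isOpen_ne_fun ?_ continuous_const
  let b := Module.finBasis 𝕜 E
  have hmatrix : Continuous fun v => LinearMap.toMatrix b b (g ∘ₗ B v) :=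
    ((LinearMap.toMatrix b b).toLinearMap ∘ₗ LinearMap.llcomp 𝕜 E F E g ∘ₗ B)
      |>.continuous_of_finiteDimensional
  simpa only [LinearMap.det_toMatrix] using hmatrix.matrix_det

end InjectiveOpen

/-- Instance search resolves the topology of `MvPolynomial (Fin 2) ℂ` to the uniform structure
`comap toMvPowerSeries` of `Mathlib.RingTheory.MvPowerSeries.Evaluation`; like the instance
declared above, it is definitionally the topology of coefficientwise convergence. -/
lemma isInducing_lcoeff :
    IsInducing (LinearMap.pi fun m => lcoeff ℂ m : MvPolynomial (Fin 2) ℂ →ₗ[ℂ] _) :=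
  ⟨rfl⟩

instance : IsTopologicalAddGroup (MvPolynomial (Fin 2) ℂ) :=
  isInducing_lcoeff.topologicalAddGroup _

instance : ContinuousSMul ℂ (MvPolynomial (Fin 2) ℂ) :=
  isInducing_lcoeff.continuousSMul continuous_id (LinearMap.map_smul _ _ _)

instance : T2Space (MvPolynomial (Fin 2) ℂ) :=
  IsEmbedding.t2Space ⟨isInducing_lcoeff, fun _ _ h => MvPolynomial.ext _ _ (congrFun h)⟩

instance {σ K : Type*} [Finite σ] [Field K] (d : ℕ) :
    FiniteDimensional K (homogeneousSubmodule σ K d) :=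
  Module.Finite.iff_fg.mpr (homogeneousSubmodule_fg σ K d)

lemma diffOp_X (i : Fin 2) : diffOp (X i) = pd i :=
  (AddMonoidAlgebra.lift_single derivMonomialHom _ 1).trans <| by
    fin_cases i <;> simp [derivMonomialHom]

lemma MvPolynomial.IsHomogeneous.pd_pow_apply {P : MvPolynomial (Fin 2) ℂ} {l : ℕ}
    (hP : P.IsHomogeneous l) (i : Fin 2) (k : ℕ) : ((pd i ^ k) P).IsHomogeneous (l - k) := by
  induction k with
  | zero => simpa using hP
  | succ k ih =>
    rw [pow_succ', Module.End.mul_apply, ← Nat.sub_sub]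
    exact ih.pderiv

lemma apolar_X_pow_eq_zero {P : MvPolynomial (Fin 2) ℂ} {l : ℕ} (hP : P.IsHomogeneous l)
    (i : Fin 2) : apolar (X i ^ (l + 1)) P = 0 := by
  have hconst := hP.pd_pow_apply i l
  rw [Nat.sub_self, ← totalDegree_zero_iff_isHomogeneous, totalDegree_eq_zero_iff_eq_C] at hconst
  rw [apolar, map_pow, diffOp_X, pow_succ', Module.End.mul_apply, hconst]
  exact pderiv_C

/-- Valued in all of `ℂ[X₀,X₁]` rather than in `ℂ[X₀,X₁]_{l-d}`: only its injectivity matters. -/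
noncomputable def catalecticant (l d : ℕ) :
    homogeneousSubmodule (Fin 2) ℂ l →ₗ[ℂ]
      homogeneousSubmodule (Fin 2) ℂ d →ₗ[ℂ] MvPolynomial (Fin 2) ℂ :=
  diffOp.toLinearMap.flip.domRestrict₁₂ _ _

lemma injective_catalecticant_iff {l d : ℕ} (P : homogeneousSubmodule (Fin 2) ℂ l) :
    Function.Injective (catalecticant l d P) ↔
      ∀ Q : MvPolynomial (Fin 2) ℂ, Q.IsHomogeneous d → apolar Q P = 0 → Q = 0 := by
  rw [injective_iff_map_eq_zero, Subtype.forall]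
  exact forall₂_congr fun Q _ => ⟨fun h hQP => congrArg Subtype.val (h hQP),
    fun h hQP => Subtype.ext (h hQP)⟩

/-- `X₀ ^ (l + 1)` annihilates `P`, so `d₁ P` is not the junk value `sInf ∅ = 0`. -/
lemma le_d1_iff_forall_injective_catalecticant {l : ℕ} (P : homogeneousSubmodule (Fin 2) ℂ l)
    (n : ℕ) : n ≤ d1 P ↔ ∀ d < n, Function.Injective (catalecticant l d P) := by
  have hne : {d | ∃ Q : MvPolynomial (Fin 2) ℂ,
      Q ≠ 0 ∧ Q.IsHomogeneous d ∧ apolar Q P = 0}.Nonempty :=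
    ⟨l + 1, X 0 ^ (l + 1), pow_ne_zero _ (X_ne_zero 0),
      by simpa using (isHomogeneous_X ℂ (0 : Fin 2)).pow (l + 1), apolar_X_pow_eq_zero P.2 0⟩
  simp_rw [injective_catalecticant_iff]
  rw [d1, le_csInf_iff (OrderBot.bddBelow _) hne]
  constructor
  · rintro h d hd Q hQd hQP
    by_contra hQ
    exact (h d ⟨Q, hQ, hQd, hQP⟩).not_gt hd
  · rintro h d ⟨Q, hQ, hQd, hQP⟩
    by_contra! hd
    exact hQ (h d hd Q hQd hQP)

lemma isOpen_setOf_le_d1 (l n : ℕ) :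
    IsOpen {P : homogeneousSubmodule (Fin 2) ℂ l | n ≤ d1 P} := by
  have hset : {P : homogeneousSubmodule (Fin 2) ℂ l | n ≤ d1 P} =
      ⋂ d ∈ Set.Iio n, {P | Function.Injective (catalecticant l d P)} := by
    ext P
    simp [le_d1_iff_forall_injective_catalecticant]
  rw [hset]
  exact (Set.finite_Iio n).isOpen_biInter fun d _ =>
    (catalecticant l d).isOpen_setOf_injective_apply

/-- `d₁` is lower semicontinuous on `ℂ[X₀,X₁]_l ∖ {0}`: each set `{d₁ ≥ n}` is open. -/
theorem d1_lowerSemicontinuous (l n : ℕ) :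
    IsOpen {P : {P : MvPolynomial (Fin 2) ℂ // P.IsHomogeneous l ∧ P ≠ 0} |
      n ≤ d1 P.1} :=
  (isOpen_setOf_le_d1 l n).preimage (continuous_subtype_val.subtype_mk fun P => P.2.1)
end

section
/- Let l ≥ 3 and let P ∈ ℂ[X₀,X₁]_l be nonzero. Then the following are equivalent: (i) Ann(P)_1 = 0 and Ann(P)_2 is the one-dimensional subspace ℂ·λ² spanned by the square of some nonzero linear form λ; (ii) P = μ^{l−1}ν for some linearly independent linear forms μ, ν ∈ ℂ[X₀,X₁]_1 (i.e. P is GL(2,ℂ)-equivalent to X₀^{l−1}X₁). -/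
/-!
Common definitions: the apolar action of `ℂ[X₀,X₁]` on itself
(`Q • P := Q(∂/∂X₀, ∂/∂X₁)(P)`), the apolar ideal `Ann(P)` and its homogeneous
components, the cokernel `C_P^d` of `Q ↦ Q • P : ℂ[X₀,X₁]_d → ℂ[X₀,X₁]_{l-d}`,
the invariant `d₁(P)` and the Waring rank.
-/

open MvPolynomial

/-!
A nonzero linear form `ℓ` acts on binary forms as the derivation `ℓ(∂₀, ∂₁)`. If `μ` is a linear
form with `ℓ • μ = 0` and `ρ` one with `ℓ • ρ = 1`, the kernel of this derivation in degree `d` is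
`ℂ μ^d`: the partial derivatives of a kernel element lie in the kernel one degree lower, and
Euler's identity reassembles them.

(i) ⇒ (ii): from `ℓ² • P = 0` we get `ℓ • P = a μ^{l-1}`, with `a ≠ 0` because `Ann(P)₁ = 0`.
Then `P - a μ^{l-1} ρ` lies in the kernel in degree `l`, so `P = μ^{l-1} (a ρ + b μ)`.

(ii) ⇒ (i): let `α, β` be the linear forms dual to `μ, ν` under the apolar pairing. Then
`β • P = μ^{l-1}` and `α • P = (l-1) μ^{l-2} ν`; writing a form of degree 1 or 2 in the monomials
of `α, β` and using that `μ^{l-3} ν` and `μ^{l-2}` are independent, `Ann(P)` meets degrees 1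
and 2 only in `ℂ β²`.
-/

open MvPolynomial

local notation "ℂ[X₀,X₁]" => MvPolynomial (Fin 2) ℂ

lemma mem_annComp {P Q : ℂ[X₀,X₁]} {d : ℕ} :
    Q ∈ annComp P d ↔ Q.IsHomogeneous d ∧ apolar Q P = 0 := Iff.rfl

lemma apolar_add (Q R f : ℂ[X₀,X₁]) : apolar (Q + R) f = apolar Q f + apolar R f := by
  simp [apolar]

lemma apolar_mul (Q R f : ℂ[X₀,X₁]) : apolar (Q * R) f = apolar Q (apolar R f) := by
  simp [apolar, Module.End.mul_apply]

lemma apolar_comm (Q R f : ℂ[X₀,X₁]) : apolar Q (apolar R f) = apolar R (apolar Q f) := by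
  rw [← apolar_mul, mul_comm, apolar_mul]

lemma apolar_C (a : ℂ) (f : ℂ[X₀,X₁]) : apolar (C a) f = C a * f := by
  rw [apolar, ← algebraMap_eq, AlgHom.commutes, Module.algebraMap_end_apply, smul_eq_C_mul]
  rfl

lemma apolar_X (i : Fin 2) (f : ℂ[X₀,X₁]) : apolar (X i) f = pderiv i f := by
  have hX : diffOp (X i) = pd 0 ^ (Finsupp.single i 1 : Fin 2 →₀ ℕ) 0 *
      pd 1 ^ (Finsupp.single i 1 : Fin 2 →₀ ℕ) 1 :=
    (AddMonoidAlgebra.lift_single derivMonomialHom (Finsupp.single i 1) 1).trans (one_smul _ _)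
  rw [apolar, hX]
  fin_cases i <;> simp [pd]

lemma apolar_zero_right (Q : ℂ[X₀,X₁]) : apolar Q 0 = 0 := map_zero (diffOp Q)

lemma apolar_add_right (Q f g : ℂ[X₀,X₁]) : apolar Q (f + g) = apolar Q f + apolar Q g :=
  map_add (diffOp Q) f g

lemma apolar_sub_right (Q f g : ℂ[X₀,X₁]) : apolar Q (f - g) = apolar Q f - apolar Q g :=
  map_sub (diffOp Q) f g

lemma apolar_C_mul_right (Q : ℂ[X₀,X₁]) (a : ℂ) (f : ℂ[X₀,X₁]) :
    apolar Q (C a * f) = C a * apolar Q f := by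
  simp only [apolar, ← smul_eq_C_mul, map_smul]

lemma MvPolynomial.IsHomogeneous.exists_eq_C {σ R : Type*} [CommSemiring R]
    {f : MvPolynomial σ R} (hf : f.IsHomogeneous 0) : ∃ c : R, f = C c :=
  ⟨_, totalDegree_eq_zero_iff_eq_C.mp ((totalDegree_zero_iff_isHomogeneous σ).mpr hf)⟩

noncomputable def linForm (a b : ℂ) : ℂ[X₀,X₁] := C a * X 0 + C b * X 1

lemma isHomogeneous_linForm (a b : ℂ) : (linForm a b).IsHomogeneous 1 :=
  (isHomogeneous_C_mul_X a 0).add (isHomogeneous_C_mul_X b 1)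

lemma MvPolynomial.IsHomogeneous.exists_eq_linForm {ℓ : ℂ[X₀,X₁]} (hℓ : ℓ.IsHomogeneous 1) :
    ∃ a b : ℂ, ℓ = linForm a b := by
  obtain ⟨a, ha⟩ := (hℓ.pderiv (i := 0)).exists_eq_C
  obtain ⟨b, hb⟩ := (hℓ.pderiv (i := 1)).exists_eq_C
  refine ⟨a, b, ?_⟩
  simpa [linForm, Fin.sum_univ_two, ha, hb, mul_comm] using hℓ.sum_X_mul_pderiv.symm

lemma linForm_eq_zero_iff {a b : ℂ} : linForm a b = 0 ↔ a = 0 ∧ b = 0 := by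
  refine ⟨fun h => ⟨?_, ?_⟩, fun ⟨ha, hb⟩ => by simp [linForm, ha, hb]⟩
  · simpa [linForm, coeff_X, Finsupp.single_eq_single_iff] using
      congrArg (coeff (Finsupp.single 0 1)) h
  · simpa [linForm, coeff_X, Finsupp.single_eq_single_iff] using
      congrArg (coeff (Finsupp.single 1 1)) h

lemma C_mul_linForm_add_C_mul_linForm (x y a b c d : ℂ) :
    C x * linForm a b + C y * linForm c d = linForm (x * a + y * c) (x * b + y * d) := by
  simp only [linForm, map_add, map_mul]
  ring

lemma apolar_linForm (a b : ℂ) (f : ℂ[X₀,X₁]) :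
    apolar (linForm a b) f = C a * pderiv 0 f + C b * pderiv 1 f := by
  rw [linForm, apolar_add, apolar_mul, apolar_mul, apolar_X, apolar_X, apolar_C, apolar_C]

lemma apolar_linForm_linForm (a b p q : ℂ) :
    apolar (linForm a b) (linForm p q) = C (a * p + b * q) := by
  rw [apolar_linForm]
  simp [linForm, pderiv_X]

section Derivation

variable {ℓ : ℂ[X₀,X₁]}

lemma MvPolynomial.IsHomogeneous.exists_apolar_eq_derivation (hℓ : ℓ.IsHomogeneous 1) :
    ∃ D : Derivation ℂ ℂ[X₀,X₁] ℂ[X₀,X₁], ∀ f, apolar ℓ f = D f := by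
  obtain ⟨a, b, rfl⟩ := hℓ.exists_eq_linForm
  exact ⟨a • pderiv 0 + b • pderiv 1, fun f => by simp [apolar_linForm, smul_eq_C_mul]⟩

lemma apolar_leibniz (hℓ : ℓ.IsHomogeneous 1) (f g : ℂ[X₀,X₁]) :
    apolar ℓ (f * g) = apolar ℓ f * g + f * apolar ℓ g := by
  obtain ⟨D, hD⟩ := hℓ.exists_apolar_eq_derivation
  simp only [hD, D.leibniz, smul_eq_mul]
  ring

lemma apolar_C_right (hℓ : ℓ.IsHomogeneous 1) (a : ℂ) : apolar ℓ (C a) = 0 := by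
  obtain ⟨D, hD⟩ := hℓ.exists_apolar_eq_derivation
  rw [hD, ← algebraMap_eq, D.map_algebraMap]

lemma apolar_one_right (hℓ : ℓ.IsHomogeneous 1) : apolar ℓ 1 = 0 := by
  simpa using apolar_C_right hℓ 1

lemma apolar_pow (hℓ : ℓ.IsHomogeneous 1) (m : ℂ[X₀,X₁]) (n : ℕ) :
    apolar ℓ (m ^ n) = C (n : ℂ) * (m ^ (n - 1) * apolar ℓ m) := by
  obtain ⟨D, hD⟩ := hℓ.exists_apolar_eq_derivation
  simp only [hD, D.leibniz_pow, nsmul_eq_mul, smul_eq_mul, map_natCast]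

lemma MvPolynomial.IsHomogeneous.apolar_of_linear {f : ℂ[X₀,X₁]} {d : ℕ}
    (hf : f.IsHomogeneous d) (hℓ : ℓ.IsHomogeneous 1) : (apolar ℓ f).IsHomogeneous (d - 1) := by
  obtain ⟨a, b, rfl⟩ := hℓ.exists_eq_linForm
  rw [apolar_linForm]
  exact (hf.pderiv.C_mul a).add (hf.pderiv.C_mul b)

end Derivation

lemma exists_adapted_basis {ℓ : ℂ[X₀,X₁]} (hℓ : ℓ.IsHomogeneous 1) (hℓ0 : ℓ ≠ 0) :
    ∃ μ ρ : ℂ[X₀,X₁], μ.IsHomogeneous 1 ∧ ρ.IsHomogeneous 1 ∧ μ ≠ 0 ∧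
      apolar ℓ μ = 0 ∧ apolar ℓ ρ = 1 ∧
      ∀ m : ℂ[X₀,X₁], m.IsHomogeneous 1 → ∃ x y : ℂ, m = C x * μ + C y * ρ := by
  obtain ⟨u, v, rfl⟩ := hℓ.exists_eq_linForm
  rw [Ne, linForm_eq_zero_iff] at hℓ0
  obtain ⟨u', v', huv⟩ : ∃ u' v' : ℂ, u * u' + v * v' = 1 := by
    by_cases hu : u = 0
    · have hv : v ≠ 0 := fun hv => hℓ0 ⟨hu, hv⟩
      exact ⟨0, v⁻¹, by field_simp; ring⟩
    · exact ⟨u⁻¹, 0, by field_simp; ring⟩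
  refine ⟨linForm v (-u), linForm u' v', isHomogeneous_linForm _ _, isHomogeneous_linForm _ _,
    ?_, ?_, ?_, fun m hm => ?_⟩
  · rwa [Ne, linForm_eq_zero_iff, neg_eq_zero, and_comm]
  · rw [apolar_linForm_linForm, mul_neg, mul_comm, add_neg_cancel, C_0]
  · rw [apolar_linForm_linForm, huv, C_1]
  · obtain ⟨a, b, rfl⟩ := hm.exists_eq_linForm
    refine ⟨a * v' - b * u', a * u + b * v, ?_⟩
    rw [C_mul_linForm_add_C_mul_linForm]
    congr 1
    · linear_combination (-a) * huv
    · linear_combination (-b) * huv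

theorem eq_C_mul_pow_of_apolar_eq_zero {ℓ μ ρ : ℂ[X₀,X₁]} (hℓ : ℓ.IsHomogeneous 1)
    (hℓμ : apolar ℓ μ = 0) (hℓρ : apolar ℓ ρ = 1)
    (hspan : ∀ m : ℂ[X₀,X₁], m.IsHomogeneous 1 → ∃ x y : ℂ, m = C x * μ + C y * ρ) {d : ℕ} :
    ∀ {f : ℂ[X₀,X₁]}, f.IsHomogeneous d → apolar ℓ f = 0 → ∃ c : ℂ, f = C c * μ ^ d := by
  induction d with
  | zero =>
    intro f hf _
    simpa using hf.exists_eq_C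
  | succ d ih =>
    intro f hf hℓf
    have hpderiv (i : Fin 2) : ∃ c : ℂ, pderiv i f = C c * μ ^ d := by
      refine ih (by simpa using hf.pderiv) ?_
      rw [← apolar_X, apolar_comm, hℓf, apolar_zero_right]
    obtain ⟨c₀, hc₀⟩ := hpderiv 0
    obtain ⟨c₁, hc₁⟩ := hpderiv 1
    obtain ⟨x, y, hxy⟩ := hspan (linForm c₀ c₁) (isHomogeneous_linForm _ _)
    have heuler : C ((d : ℂ) + 1) * f = (C x * μ + C y * ρ) * μ ^ d := by
      have hsum := hf.sum_X_mul_pderiv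
      rw [Fin.sum_univ_two, hc₀, hc₁, nsmul_eq_mul] at hsum
      rw [← hxy, linForm, show C ((d : ℂ) + 1) = ((d + 1 : ℕ) : ℂ[X₀,X₁]) by simp, ← hsum]
      ring
    have hy : C y * μ ^ d = 0 := by
      have h := congrArg (apolar ℓ) heuler
      rw [apolar_C_mul_right, hℓf, apolar_leibniz hℓ, apolar_pow hℓ, apolar_add_right,
        apolar_C_mul_right, apolar_C_mul_right, hℓμ, hℓρ] at h
      simpa [eq_comm] using h
    have hd : (d : ℂ) + 1 ≠ 0 := Nat.cast_add_one_ne_zero d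
    refine ⟨x / ((d : ℂ) + 1), mul_left_cancel₀ (C_ne_zero.mpr hd) ?_⟩
    rw [heuler, ← mul_assoc, ← map_mul, mul_div_cancel₀ _ hd]
    linear_combination ρ * hy

lemma linearIndependent_of_apolar {ℓ μ ν : ℂ[X₀,X₁]} (hμ0 : μ ≠ 0) (hℓμ : apolar ℓ μ = 0)
    (hℓν : apolar ℓ ν ≠ 0) : LinearIndependent ℂ ![μ, ν] := by
  unfold apolar at hℓμ hℓν
  refine LinearIndependent.pair_iff.2 fun s t hst => ?_
  have ht : t • diffOp ℓ ν = 0 := by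
    simpa [hℓμ] using congrArg (diffOp ℓ) hst
  obtain rfl : t = 0 := (smul_eq_zero.1 ht).resolve_right hℓν
  exact ⟨(smul_eq_zero.1 (by simpa using hst)).resolve_right hμ0, rfl⟩

theorem exists_eq_pow_mul_of_apolar_sq_eq_zero {k : ℕ} {P ℓ : ℂ[X₀,X₁]}
    (hP : P.IsHomogeneous (k + 1)) (hℓ : ℓ.IsHomogeneous 1) (h1 : apolar ℓ P ≠ 0)
    (h2 : apolar (ℓ ^ 2) P = 0) :
    ∃ μ ν : ℂ[X₀,X₁], μ.IsHomogeneous 1 ∧ ν.IsHomogeneous 1 ∧ LinearIndependent ℂ ![μ, ν] ∧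
      P = μ ^ k * ν := by
  have hℓ0 : ℓ ≠ 0 := by rintro rfl; simp [apolar] at h1
  obtain ⟨μ, ρ, hμ, hρ, hμ0, hℓμ, hℓρ, hspan⟩ := exists_adapted_basis hℓ hℓ0
  have hker := @eq_C_mul_pow_of_apolar_eq_zero _ _ _ hℓ hℓμ hℓρ hspan
  obtain ⟨a, ha⟩ := hker (by simpa using hP.apolar_of_linear hℓ)
    (by rwa [pow_two, apolar_mul] at h2)
  have hμρ : apolar ℓ (μ ^ k * ρ) = μ ^ k := by
    rw [apolar_leibniz hℓ, apolar_pow hℓ, hℓμ, hℓρ]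
    ring
  obtain ⟨b, hb⟩ := hker (hP.sub (by simpa using ((hμ.pow k).mul hρ).C_mul a))
    (by rw [apolar_sub_right, apolar_C_mul_right, hμρ, ha, sub_self])
  refine ⟨μ, C a * ρ + C b * μ, hμ, (hρ.C_mul a).add (hμ.C_mul b),
    linearIndependent_of_apolar hμ0 hℓμ fun hν => h1 ?_, by linear_combination hb⟩
  rw [apolar_add_right, apolar_C_mul_right, apolar_C_mul_right, hℓρ, hℓμ, mul_one, mul_zero,
    add_zero, C_eq_zero] at hν
  rw [ha, hν, C_0, zero_mul]

lemma det_ne_zero_of_linearIndependent {p q r s : ℂ}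
    (h : LinearIndependent ℂ ![linForm p q, linForm r s]) : p * s - q * r ≠ 0 := by
  intro hD
  simp only [smul_eq_C_mul, C_mul_linForm_add_C_mul_linForm, LinearIndependent.pair_iff,
    linForm_eq_zero_iff] at h
  obtain ⟨-, hq⟩ := h s (-q) ⟨by linear_combination hD, by ring⟩
  obtain ⟨-, hp⟩ := h r (-p) ⟨by ring, by linear_combination -hD⟩
  exact one_ne_zero (h 1 0 ⟨by linear_combination -hp, by linear_combination -hq⟩).1

lemma exists_dual_basis {μ ν : ℂ[X₀,X₁]} (hμ : μ.IsHomogeneous 1) (hν : ν.IsHomogeneous 1)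
    (hind : LinearIndependent ℂ ![μ, ν]) :
    ∃ α β : ℂ[X₀,X₁], α.IsHomogeneous 1 ∧ β.IsHomogeneous 1 ∧
      apolar α μ = 1 ∧ apolar α ν = 0 ∧ apolar β μ = 0 ∧ apolar β ν = 1 ∧
      ∀ ℓ : ℂ[X₀,X₁], ℓ.IsHomogeneous 1 → ∃ x y : ℂ, ℓ = C x * α + C y * β := by
  obtain ⟨p, q, rfl⟩ := hμ.exists_eq_linForm
  obtain ⟨r, s, rfl⟩ := hν.exists_eq_linForm
  obtain ⟨D, hD_def⟩ : ∃ D, D = p * s - q * r := ⟨_, rfl⟩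
  have hD : D ≠ 0 := hD_def ▸ det_ne_zero_of_linearIndependent hind
  refine ⟨linForm (s / D) (-r / D), linForm (-q / D) (p / D), isHomogeneous_linForm _ _,
    isHomogeneous_linForm _ _, ?_, ?_, ?_, ?_, fun ℓ hℓ => ?_⟩
  · rw [apolar_linForm_linForm, ← C_1]
    congr 1
    field_simp
    linear_combination -hD_def
  · rw [apolar_linForm_linForm, ← C_0]
    congr 1
    field_simp
    ring
  · rw [apolar_linForm_linForm, ← C_0]
    congr 1
    field_simp
    ring
  · rw [apolar_linForm_linForm, ← C_1]
    congr 1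
    field_simp
    linear_combination -hD_def
  · obtain ⟨a, b, rfl⟩ := hℓ.exists_eq_linForm
    refine ⟨a * p + b * q, a * r + b * s, ?_⟩
    rw [C_mul_linForm_add_C_mul_linForm]
    congr 1 <;> field_simp
    · linear_combination a * hD_def
    · linear_combination b * hD_def

lemma exists_eq_C_mul_sq_add_of_isHomogeneous_two {α β Q : ℂ[X₀,X₁]}
    (hspan : ∀ ℓ : ℂ[X₀,X₁], ℓ.IsHomogeneous 1 → ∃ x y : ℂ, ℓ = C x * α + C y * β)
    (hQ : Q.IsHomogeneous 2) :
    ∃ a b c : ℂ, Q = C a * α ^ 2 + C b * (α * β) + C c * β ^ 2 := by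
  obtain ⟨x₀, y₀, hX₀⟩ := hspan (X 0) (isHomogeneous_X ℂ 0)
  obtain ⟨x₁, y₁, hX₁⟩ := hspan (X 1) (isHomogeneous_X ℂ 1)
  obtain ⟨x₀', y₀', hQ₀⟩ := hspan (pderiv 0 Q) hQ.pderiv
  obtain ⟨x₁', y₁', hQ₁⟩ := hspan (pderiv 1 Q) hQ.pderiv
  have heuler := hQ.sum_X_mul_pderiv
  rw [Fin.sum_univ_two, hX₀, hX₁, hQ₀, hQ₁] at heuler
  refine ⟨2⁻¹ * (x₀ * x₀' + x₁ * x₁'), 2⁻¹ * (x₀ * y₀' + y₀ * x₀' + x₁ * y₁' + y₁ * x₁'),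
    2⁻¹ * (y₀ * y₀' + y₁ * y₁'), ?_⟩
  have hhalf : Q = (2⁻¹ : ℂ) • (2 • Q) := by
    rw [← Nat.cast_smul_eq_nsmul ℂ, smul_smul]
    norm_num
  rw [hhalf, ← heuler, smul_eq_C_mul]
  simp only [map_mul, map_add]
  ring

lemma eq_zero_of_pow_mul_eq_zero {μ ν : ℂ[X₀,X₁]} (hind : LinearIndependent ℂ ![μ, ν]) {k : ℕ}
    {s t : ℂ} (h : μ ^ k * (C s * μ + C t * ν) = 0) : s = 0 ∧ t = 0 := by
  have hμk : μ ^ k ≠ 0 := pow_ne_zero _ (by simpa using hind.ne_zero 0)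
  exact hind.eq_zero_of_pair (by simpa [smul_eq_C_mul] using (mul_eq_zero.1 h).resolve_left hμk)

theorem annComp_one_pow_mul_eq_bot {μ ν : ℂ[X₀,X₁]} (hμ : μ.IsHomogeneous 1)
    (hν : ν.IsHomogeneous 1) (hind : LinearIndependent ℂ ![μ, ν]) (n : ℕ) :
    annComp (μ ^ (n + 1) * ν) 1 = ⊥ := by
  obtain ⟨α, β, hα, hβ, hαμ, hαν, hβμ, hβν, hspan⟩ := exists_dual_basis hμ hν hind
  refine eq_bot_iff.2 fun ℓ hℓ => ?_
  obtain ⟨hℓ1, hℓP⟩ := mem_annComp.1 hℓ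
  obtain ⟨x, y, rfl⟩ := hspan ℓ hℓ1
  have h : μ ^ n * (C y * μ + C (x * (n + 1)) * ν) = 0 := by
    rw [← hℓP]
    simp only [apolar_add, apolar_mul, apolar_C, apolar_leibniz hα, apolar_leibniz hβ,
      apolar_pow hα, apolar_pow hβ, hαμ, hαν, hβμ, hβν, Nat.add_sub_cancel]
    simp only [map_mul, map_add, map_natCast, map_one]
    push_cast
    ring
  obtain ⟨rfl, hx⟩ := eq_zero_of_pow_mul_eq_zero hind h
  obtain rfl : x = 0 := (mul_eq_zero.1 hx).resolve_right (Nat.cast_add_one_ne_zero n)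
  simp

theorem exists_annComp_two_pow_mul_eq_span {μ ν : ℂ[X₀,X₁]} (hμ : μ.IsHomogeneous 1)
    (hν : ν.IsHomogeneous 1) (hind : LinearIndependent ℂ ![μ, ν]) (n : ℕ) :
    ∃ lam : ℂ[X₀,X₁], lam.IsHomogeneous 1 ∧ lam ≠ 0 ∧
      annComp (μ ^ (n + 2) * ν) 2 = Submodule.span ℂ {lam ^ 2} := by
  obtain ⟨α, β, hα, hβ, hαμ, hαν, hβμ, hβν, hspan⟩ := exists_dual_basis hμ hν hind
  refine ⟨β, hβ, by rintro rfl; simp [apolar] at hβν, le_antisymm (fun Q hQ => ?_) ?_⟩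
  · obtain ⟨hQ2, hQP⟩ := mem_annComp.1 hQ
    obtain ⟨a, b, c, rfl⟩ := exists_eq_C_mul_sq_add_of_isHomogeneous_two hspan hQ2
    have h : μ ^ n * (C (b * (n + 2)) * μ + C (a * (n + 2) * (n + 1)) * ν) = 0 := by
      rw [← hQP]
      simp only [pow_two, apolar_add, apolar_add_right, apolar_mul, apolar_C,
        apolar_zero_right, apolar_C_right hα, apolar_C_right hβ, apolar_one_right hα,
        apolar_one_right hβ, apolar_leibniz hα, apolar_leibniz hβ,
        apolar_pow hα, apolar_pow hβ, hαμ, hαν, hβμ, hβν]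
      simp only [map_mul, map_add, map_natCast, map_one, map_ofNat]
      push_cast
      ring
    have hn2 : (n : ℂ) + 2 ≠ 0 := by exact_mod_cast Nat.succ_ne_zero (n + 1)
    obtain ⟨hb, ha⟩ := eq_zero_of_pow_mul_eq_zero hind h
    obtain rfl : b = 0 := (mul_eq_zero.1 hb).resolve_right hn2
    obtain rfl : a = 0 := by simpa [hn2, Nat.cast_add_one_ne_zero n] using ha
    exact Submodule.mem_span_singleton.2 ⟨c, by simp [smul_eq_C_mul]⟩
  · rw [Submodule.span_le, Set.singleton_subset_iff]
    refine mem_annComp.2 ⟨by simpa using hβ.pow 2, ?_⟩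
    simp only [pow_two, apolar_mul, apolar_add_right, apolar_zero_right, apolar_one_right hβ,
      apolar_leibniz hβ, apolar_pow hβ, hβμ, hβν]
    simp

theorem ann_one_two_iff_general (l : ℕ) (hl : 3 ≤ l) (P : MvPolynomial (Fin 2) ℂ)
    (hP : P.IsHomogeneous l) :
    (annComp P 1 = ⊥ ∧ ∃ lam : MvPolynomial (Fin 2) ℂ,
        lam.IsHomogeneous 1 ∧ lam ≠ 0 ∧ annComp P 2 = Submodule.span ℂ {lam ^ 2})
      ↔ ∃ mu nu : MvPolynomial (Fin 2) ℂ,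
        mu.IsHomogeneous 1 ∧ nu.IsHomogeneous 1 ∧ LinearIndependent ℂ ![mu, nu] ∧
        P = mu ^ (l - 1) * nu := by
  obtain ⟨n, rfl⟩ : ∃ n, l = n + 2 + 1 := ⟨l - 3, by omega⟩
  rw [Nat.add_sub_cancel]
  constructor
  · rintro ⟨h1, lam, hlam, hlam0, h2⟩
    refine exists_eq_pow_mul_of_apolar_sq_eq_zero hP hlam (fun h => hlam0 ?_) ?_
    · simpa [h1] using mem_annComp.2 ⟨hlam, h⟩
    · exact (mem_annComp.1 (h2 ▸ Submodule.mem_span_singleton_self _)).2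
  · rintro ⟨mu, nu, hmu, hnu, hind, rfl⟩
    exact ⟨annComp_one_pow_mul_eq_bot hmu hnu hind (n + 1),
      exists_annComp_two_pow_mul_eq_span hmu hnu hind n⟩

/-- For `l ≥ 3` and a nonzero binary form `P` of degree `l`, the following are equivalent:
(i) `Ann(P)₁ = 0` and `Ann(P)₂ = ℂ·λ²` for some nonzero linear form `λ`;
(ii) `P = μ^{l-1}·ν` for linearly independent linear forms `μ`, `ν`. -/
theorem ann_one_two_iff (l : ℕ) (hl : 3 ≤ l) (P : MvPolynomial (Fin 2) ℂ)
    (hP : P.IsHomogeneous l) (hP0 : P ≠ 0) :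
    (annComp P 1 = ⊥ ∧ ∃ lam : MvPolynomial (Fin 2) ℂ,
        lam.IsHomogeneous 1 ∧ lam ≠ 0 ∧ annComp P 2 = Submodule.span ℂ {lam ^ 2})
      ↔ ∃ mu nu : MvPolynomial (Fin 2) ℂ,
        mu.IsHomogeneous 1 ∧ nu.IsHomogeneous 1 ∧ LinearIndependent ℂ ![mu, nu] ∧
        P = mu ^ (l - 1) * nu :=
  ann_one_two_iff_general l hl P hP
end

section
/- Let m ≥ 1 and P := X₀^m X₁^m (X₀ + X₁), a nonzero homogeneous polynomial of degree 2m+1. Then the apolar ideal Ann(P) is the ideal of ℂ[X₀,X₁] generated by the two homogeneous polynomials G₁ := ∑_{k=0}^{m+1} (−1)^k X₀^{m+1−k} X₁^k (of degree m+1) and G₂ := X₁^{m+2} (here the generators are viewed as polynomials in the dual variables acting by ∂/∂X₀, ∂/∂X₁), and the Waring rank satisfies rk(X₀^m X₁^m (X₀ + X₁)) = m + 1. -/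
/-!
Common definitions: the apolar action of `ℂ[X₀,X₁]` on itself
(`Q • P := Q(∂/∂X₀, ∂/∂X₁)(P)`), the apolar ideal `Ann(P)` and its homogeneous
components, the cokernel `C_P^d` of `Q ↦ Q • P : ℂ[X₀,X₁]_d → ℂ[X₀,X₁]_{l-d}`,
the invariant `d₁(P)` and the Waring rank.
-/

open MvPolynomial

/-!
Let `P = X₀^m X₁^m (X₀ + X₁)` and let `G` be the alternating form of degree `m + 1`. For a
form `Q` of degree `d` and a linear form `ℓ`, `Q • ℓ^n` is `n!/(n-d)!` times `Q(∂ℓ) ℓ^{n-d}`,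
where `∂ℓ` is the coefficient vector of `ℓ`. A discrete Fourier computation with a primitive
`(m+2)`-th root of unity `ω` writes `P = ∑_{j=1}^{m+1} c_j (ω^j X₀ - X₁)^{2m+1}`, and `G`
vanishes at every `(ω^j, -1)`, so `G • P = 0`; the decomposition also gives `rk P ≤ m + 1`.

Conversely, `G` is monic in `X₀`, so any `Q ∈ Ann(P)` is `G q + R` with `R ∈ Ann(P)` of
`X₀`-degree at most `m`, and comparing coefficients in `R • P = 0` shows `X₁^{m+2} ∣ R`.
For the rank, if `P = ∑_{i<r} λ_i^{2m+1}` with `r ≤ m`, the product of linear forms `μ_i` with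
`μ_i(∂λ_i) = 0` is a nonzero form of degree `r` in `Ann(P)`; it would be divisible by
`X₁^{m+2}`, which is impossible.
-/

noncomputable def biexp (a b : ℕ) : Fin 2 →₀ ℕ := Finsupp.single 0 a + Finsupp.single 1 b

@[simp] lemma biexp_apply_zero (a b : ℕ) : biexp a b 0 = a := by simp [biexp]

@[simp] lemma biexp_apply_one (a b : ℕ) : biexp a b 1 = b := by simp [biexp]

lemma biexp_eta (s : Fin 2 →₀ ℕ) : biexp (s 0) (s 1) = s := by
  ext i; fin_cases i <;> simp

lemma biexp_add_biexp (a b c d : ℕ) : biexp a b + biexp c d = biexp (a + c) (b + d) := by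
  ext i; fin_cases i <;> simp

lemma biexp_le_biexp_iff {a b c d : ℕ} : biexp a b ≤ biexp c d ↔ a ≤ c ∧ b ≤ d := by
  simp [Finsupp.le_def, Fin.forall_fin_two]

lemma pd_apply (i : Fin 2) (p : MvPolynomial (Fin 2) ℂ) : pd i p = pderiv i p := rfl

lemma pd_pow_monomial (i : Fin 2) (n : ℕ) (s : Fin 2 →₀ ℕ) (c : ℂ) :
    (pd i ^ n) (monomial s c) =
      monomial (s - Finsupp.single i n) ((s i).descFactorial n * c) := by
  induction n generalizing s c with
  | zero => simp
  | succ n ih =>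
    rw [pow_succ', Module.End.mul_apply, ih, pd_apply, pderiv_monomial, tsub_tsub,
      ← Finsupp.single_add, Finsupp.tsub_apply, Finsupp.single_eq_same, Nat.descFactorial_succ]
    push_cast
    ring_nf

lemma diffOp_monomial (t : Fin 2 →₀ ℕ) (c : ℂ) :
    diffOp (monomial t c) = c • (pd 0 ^ t 0 * pd 1 ^ t 1) := by
  rw [diffOp, ← single_eq_monomial]
  erw [AddMonoidAlgebra.lift_single]
  rfl

lemma apolar_add_left (p q P : MvPolynomial (Fin 2) ℂ) :
    apolar (p + q) P = apolar p P + apolar q P :=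
  map_add (apolarLM P) p q

lemma apolar_add_right_s15 (Q P P' : MvPolynomial (Fin 2) ℂ) :
    apolar Q (P + P') = apolar Q P + apolar Q P' :=
  map_add (diffOp Q) P P'

lemma apolar_monomial (t s : Fin 2 →₀ ℕ) (c a : ℂ) :
    apolar (monomial t c) (monomial s a) =
      monomial (s - t) ((s 0).descFactorial (t 0) * (s 1).descFactorial (t 1) * c * a) := by
  rw [apolar, diffOp_monomial, LinearMap.smul_apply, Module.End.mul_apply, pd_pow_monomial,
    pd_pow_monomial, Finsupp.tsub_apply, Finsupp.single_eq_of_ne (by decide), tsub_zero,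
    tsub_tsub, add_comm, ← biexp, biexp_eta, smul_monomial, smul_eq_mul]
  ring_nf

lemma coeff_apolar_monomial_of_add_eq (Q : MvPolynomial (Fin 2) ℂ) {s τ t : Fin 2 →₀ ℕ}
    (h : τ + t = s) :
    coeff τ (apolar Q (monomial s 1)) =
      (s 0).descFactorial (t 0) * (s 1).descFactorial (t 1) * coeff t Q := by
  induction Q using MvPolynomial.induction_on' with
  | monomial u c =>
    rw [apolar_monomial, mul_one, coeff_monomial, coeff_monomial]
    by_cases hu : u ≤ s
    · have key : s - u = τ ↔ u = t := by
        rw [tsub_eq_iff_eq_add_of_le hu, ← h, add_comm τ, add_comm τ, add_left_inj, eq_comm]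
      by_cases hut : u = t
      · subst hut; simp [key]
      · simp [key, hut]
    · obtain ⟨i, hi⟩ : ∃ i, s i < u i := by
        simpa only [Finsupp.le_def, not_forall, not_le] using hu
      have hut : u ≠ t := by rintro rfl; exact hu (h ▸ le_add_self)
      have : (s i).descFactorial (u i) = 0 := Nat.descFactorial_eq_zero_iff_lt.2 hi
      fin_cases i <;> simp_all
  | add p q hp hq => rw [apolar_add_left, coeff_add, hp, hq, coeff_add, mul_add]

lemma coeff_apolar_monomial_of_not_le (Q : MvPolynomial (Fin 2) ℂ) {s τ : Fin 2 →₀ ℕ}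
    (h : ¬ τ ≤ s) : coeff τ (apolar Q (monomial s 1)) = 0 := by
  induction Q using MvPolynomial.induction_on' with
  | monomial u c =>
    rw [apolar_monomial, coeff_monomial, if_neg]
    rintro rfl
    exact h tsub_le_self
  | add p q hp hq => rw [apolar_add_left, coeff_add, hp, hq, add_zero]

lemma pd_pow_pow {L : MvPolynomial (Fin 2) ℂ} {i : Fin 2} {c : ℂ} (hL : pderiv i L = C c)
    (n k : ℕ) : (pd i ^ k) (L ^ n) = (n.descFactorial k * c ^ k) • L ^ (n - k) := by
  induction k with
  | zero => simp
  | succ k ih =>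
    rw [pow_succ', Module.End.mul_apply, ih, map_smul, pd_apply, pderiv_pow, hL,
      Nat.descFactorial_succ, Nat.sub_sub, smul_eq_C_mul, smul_eq_C_mul]
    push_cast
    simp only [map_mul, map_natCast, map_pow]
    ring

lemma apolar_monomial_pow {L : MvPolynomial (Fin 2) ℂ} {c : Fin 2 → ℂ}
    (hL : ∀ i, pderiv i L = C (c i)) (t : Fin 2 →₀ ℕ) (a : ℂ) (n : ℕ) :
    apolar (monomial t a) (L ^ n) =
      (n.descFactorial t.degree * eval c (monomial t a)) • L ^ (n - t.degree) := by
  have hdesc := Nat.descFactorial_mul_descFactorial (n := n) (le_add_self : t 1 ≤ t 0 + t 1)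
  rw [Nat.add_sub_cancel] at hdesc
  rw [apolar, diffOp_monomial, LinearMap.smul_apply, Module.End.mul_apply, pd_pow_pow (hL 1),
    map_smul, pd_pow_pow (hL 0), smul_smul, smul_smul, eval_monomial,
    Finsupp.prod_fintype _ _ (by simp), Fin.prod_univ_two, Finsupp.degree_eq_sum,
    Fin.sum_univ_two, ← hdesc, Nat.sub_sub, add_comm (t 1)]
  push_cast
  ring_nf

lemma apolar_pow_of_isHomogeneous {L Q : MvPolynomial (Fin 2) ℂ} {c : Fin 2 → ℂ}
    (hL : ∀ i, pderiv i L = C (c i)) {d : ℕ} (hQ : Q.IsHomogeneous d) (n : ℕ) :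
    apolar Q (L ^ n) = (n.descFactorial d * eval c Q) • L ^ (n - d) := by
  conv_lhs => rw [Q.as_sum]
  conv_rhs => rw [Q.as_sum, map_sum, Finset.mul_sum, Finset.sum_smul]
  rw [← apolarLM_apply, map_sum]
  refine Finset.sum_congr rfl fun t ht => ?_
  have htd : t.degree = d := by
    rw [Finsupp.degree_eq_weight_one]; exact hQ (mem_support_iff.1 ht)
  rw [apolarLM_apply, apolar_monomial_pow hL, htd]

noncomputable def specialForm (m : ℕ) : MvPolynomial (Fin 2) ℂ := X 0 ^ m * X 1 ^ m * (X 0 + X 1)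

noncomputable def altForm (m : ℕ) : MvPolynomial (Fin 2) ℂ :=
  ∑ k ∈ Finset.range (m + 2), (-1 : ℂ) ^ k • (X 0 ^ (m + 1 - k) * X 1 ^ k)

lemma IsPrimitiveRoot.geom_sum_pow_eq_ite {K : Type*} [Field K] {ω : K} {N : ℕ}
    (hω : IsPrimitiveRoot ω N) (u : ℕ) :
    ∑ j ∈ Finset.range N, (ω ^ u) ^ j = if N ∣ u then (N : K) else 0 := by
  split_ifs with h
  · simp [(hω.pow_eq_one_iff_dvd u).2 h]
  · rw [geom_sum_eq (mt (hω.pow_eq_one_iff_dvd u).1 h), ← pow_mul, mul_comm, pow_mul,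
      hω.pow_eq_one, one_pow, sub_self, zero_div]

lemma sub_X_pow_eq_sum (a : ℂ) (n : ℕ) :
    (C a * X 0 - X 1 : MvPolynomial (Fin 2) ℂ) ^ n =
      ∑ t ∈ Finset.range (n + 1),
        (a ^ t * ((-1) ^ (n - t) * n.choose t)) • (X 0 ^ t * X 1 ^ (n - t)) := by
  rw [sub_eq_add_neg, add_pow]
  refine Finset.sum_congr rfl fun t _ => ?_
  rw [smul_eq_C_mul, neg_pow, mul_pow, ← C_pow]
  simp only [map_mul, map_pow, map_neg, map_one, map_natCast]
  ring

/-- With `ℓ_j = ω^j X₀ - X₁`, the weights `ω^j (ω^j - 1)` satisfy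
`∑_{j<m+2} ω^j (ω^j - 1) ω^{jt} = (m + 2) ([t = m] - [t = m + 1])` for `t ≤ 2m + 1`, so
`∑_j c_j ℓ_j^{2m+1}` keeps only the monomials `X₀^m X₁^{m+1}` and `X₀^{m+1} X₁^m`; the constant
factor normalises both coefficients to `1`. -/
noncomputable def waringWeight (m : ℕ) (ω : ℂ) (j : ℕ) : ℂ :=
  (-1) ^ (m + 1) / ((m + 2) * (2 * m + 1).choose m) * (ω ^ j * (ω ^ j - 1))

lemma sum_waringWeight_mul_pow {m : ℕ} {ω : ℂ} (hω : IsPrimitiveRoot ω (m + 2)) {t : ℕ}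
    (ht : t ≤ 2 * m + 1) :
    (∑ j ∈ Finset.range (m + 1), waringWeight m ω (j + 1) * (ω ^ (j + 1)) ^ t) *
        ((-1) ^ (2 * m + 1 - t) * (2 * m + 1).choose t) =
      (if t = m then 1 else 0) + (if t = m + 1 then 1 else 0) := by
  have hsum : ∑ j ∈ Finset.range (m + 1), waringWeight m ω (j + 1) * (ω ^ (j + 1)) ^ t =
      (-1) ^ (m + 1) / ((m + 2) * (2 * m + 1).choose m) *
        (∑ j ∈ Finset.range (m + 2), (ω ^ (t + 2)) ^ j -
          ∑ j ∈ Finset.range (m + 2), (ω ^ (t + 1)) ^ j) := by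
    rw [← Finset.sum_sub_distrib, Finset.mul_sum, Finset.sum_range_succ' _ (m + 1)]
    simp only [waringWeight, pow_zero, sub_self, mul_zero, add_zero]
    refine Finset.sum_congr rfl fun j _ => ?_
    ring
  have hdvd : ∀ u, 0 < u → u < 2 * (m + 2) → (m + 2 ∣ u ↔ u = m + 2) := fun u hu hu' =>
    ⟨fun h => Nat.eq_of_dvd_of_lt_two_mul hu.ne' h hu', fun h => h ▸ dvd_rfl⟩
  have hN : ((m + 2 : ℂ) * (2 * m + 1).choose m) ≠ 0 := by
    have := Nat.choose_pos (show m ≤ 2 * m + 1 by omega)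
    norm_cast; positivity
  rw [hsum, hω.geom_sum_pow_eq_ite, hω.geom_sum_pow_eq_ite,
    if_congr (hdvd _ (by omega) (by omega)) rfl rfl,
    if_congr (hdvd _ (by omega) (by omega)) rfl rfl]
  obtain rfl | htm := eq_or_ne t m
  · simp only [if_true, if_neg (by omega : t + 1 ≠ t + 2), if_neg (by omega : t ≠ t + 1),
      show 2 * t + 1 - t = t + 1 by omega]
    push_cast
    rw [sub_zero, add_zero]
    field_simp
    rw [← pow_mul, Even.neg_one_pow ⟨t + 1, by ring⟩, one_mul, div_self hN]
  obtain rfl | htm' := eq_or_ne t (m + 1)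
  · simp only [if_true, if_neg (by omega : m + 1 + 2 ≠ m + 2), if_neg (by omega : m + 1 ≠ m),
      show 2 * m + 1 - (m + 1) = m by omega, Nat.choose_symm_half]
    push_cast
    rw [zero_sub, zero_add, pow_succ]
    field_simp
    rw [← pow_mul, Even.neg_one_pow ⟨m, by ring⟩, one_mul, div_self hN]
  · simp [htm, htm']

lemma specialForm_eq_sum_smul_pow {m : ℕ} {ω : ℂ} (hω : IsPrimitiveRoot ω (m + 2)) :
    specialForm m = ∑ j ∈ Finset.range (m + 1),
      waringWeight m ω (j + 1) • (C (ω ^ (j + 1)) * X 0 - X 1) ^ (2 * m + 1) := by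
  simp_rw [sub_X_pow_eq_sum, Finset.smul_sum, smul_smul]
  rw [Finset.sum_comm]
  simp_rw [← Finset.sum_smul, ← mul_assoc (waringWeight _ _ _), ← Finset.sum_mul]
  rw [Finset.sum_congr rfl fun t ht => by
    rw [sum_waringWeight_mul_pow hω (Nat.lt_succ_iff.1 (Finset.mem_range.1 ht))]]
  simp_rw [add_smul, ite_smul, one_smul, zero_smul, Finset.sum_add_distrib, Finset.sum_ite_eq',
    Finset.mem_range]
  rw [if_pos (by omega), if_pos (by omega), show 2 * m + 1 - m = m + 1 by omega,
    show 2 * m + 1 - (m + 1) = m by omega, specialForm]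
  ring

lemma isHomogeneous_altForm (m : ℕ) : (altForm m).IsHomogeneous (m + 1) := by
  refine IsHomogeneous.sum _ _ _ fun k hk => (homogeneousSubmodule _ _ _).smul_mem _ ?_
  have := (isHomogeneous_X_pow (R := ℂ) (0 : Fin 2) (m + 1 - k)).mul (isHomogeneous_X_pow 1 k)
  rwa [Nat.sub_add_cancel (Nat.lt_succ_iff.1 (Finset.mem_range.1 hk))] at this

lemma eval_altForm (m : ℕ) (a : ℂ) :
    eval ![a, -1] (altForm m) = ∑ i ∈ Finset.range (m + 2), a ^ i := by
  rw [← Finset.sum_range_reflect]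
  simp only [altForm, map_sum, smul_eval, map_mul, map_pow, eval_X]
  refine Finset.sum_congr rfl fun k _ => ?_
  simp only [Matrix.cons_val_zero, Matrix.cons_val_one, Matrix.cons_val_fin_one]
  rw [mul_left_comm, ← mul_pow, neg_one_mul, neg_neg, one_pow, mul_one]
  rfl

lemma pderiv_C_mul_X_sub_X (a : ℂ) (i : Fin 2) :
    pderiv i (C a * X 0 - X 1 : MvPolynomial (Fin 2) ℂ) = C (![a, -1] i) := by
  fin_cases i <;> simp [pderiv_X]

lemma apolar_altForm_specialForm (m : ℕ) : apolar (altForm m) (specialForm m) = 0 := by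
  obtain ⟨ω, hω⟩ : ∃ ω : ℂ, IsPrimitiveRoot ω (m + 2) :=
    ⟨_, Complex.isPrimitiveRoot_exp _ (by omega)⟩
  rw [specialForm_eq_sum_smul_pow hω, apolar, map_sum]
  refine Finset.sum_eq_zero fun j hj => ?_
  rw [map_smul, ← apolar, apolar_pow_of_isHomogeneous (pderiv_C_mul_X_sub_X _)
    (isHomogeneous_altForm m), eval_altForm, hω.geom_sum_pow_eq_ite,
    if_neg (Nat.not_dvd_of_pos_of_lt j.succ_pos (by simpa using hj))]
  simp

lemma X_pow_mul_X_pow_eq_monomial (a b : ℕ) :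
    (X 0 ^ a * X 1 ^ b : MvPolynomial (Fin 2) ℂ) = monomial (biexp a b) 1 := by
  rw [X_pow_eq_monomial, X_pow_eq_monomial, monomial_mul, one_mul, biexp]

lemma specialForm_eq_monomial_add_monomial (m : ℕ) :
    specialForm m = monomial (biexp (m + 1) m) 1 + monomial (biexp m (m + 1)) 1 := by
  rw [← X_pow_mul_X_pow_eq_monomial, ← X_pow_mul_X_pow_eq_monomial, specialForm]
  ring

lemma apolar_X_one_pow_specialForm (m : ℕ) : apolar (X 1 ^ (m + 2)) (specialForm m) = 0 := by
  rw [← one_mul (X 1 ^ (m + 2)), ← pow_zero (X 0), X_pow_mul_X_pow_eq_monomial,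
    specialForm_eq_monomial_add_monomial, apolar_add_right_s15, apolar_monomial, apolar_monomial]
  simp

/-- The coefficient of `X₀^{m-a} X₁^{m-b}` in `R • P` links the coefficients of
`X₀^{a+1} X₁^b` and `X₀^a X₁^{b+1}` in `R`, so they vanish by induction on `b`, starting from
`X₀^{m+1}`, which does not occur in `R`. -/
lemma coeff_eq_zero_of_apolar_specialForm_eq_zero {m : ℕ} {R : MvPolynomial (Fin 2) ℂ}
    (hR : apolar R (specialForm m) = 0) (hdeg : R.degreeOf 0 ≤ m) {b : ℕ} (hb : b ≤ m + 1) :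
    ∀ a ≤ m, coeff (biexp a b) R = 0 := by
  have hcoeff : ∀ τ, coeff τ (apolar R (monomial (biexp (m + 1) m) 1)) +
      coeff τ (apolar R (monomial (biexp m (m + 1)) 1)) = 0 := fun τ => by
    rw [← coeff_add, ← apolar_add_right_s15, ← specialForm_eq_monomial_add_monomial, hR, coeff_zero]
  induction b with
  | zero =>
    intro a ha
    have h := hcoeff (biexp (m - a) (m + 1))
    rw [coeff_apolar_monomial_of_not_le _ (by simp [biexp_le_biexp_iff]), zero_add,
      coeff_apolar_monomial_of_add_eq _ (t := biexp a 0)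
        (by rw [biexp_add_biexp]; congr 1; omega)] at h
    simp only [biexp_apply_zero, biexp_apply_one, mul_eq_zero, Nat.cast_eq_zero,
      Nat.descFactorial_eq_zero_iff_lt] at h
    exact h.resolve_left (by omega)
  | succ b ih =>
    intro a ha
    have h := hcoeff (biexp (m - a) (m - b))
    rw [coeff_apolar_monomial_of_add_eq _ (t := biexp (a + 1) b)
        (by rw [biexp_add_biexp]; congr 1 <;> omega),
      coeff_apolar_monomial_of_add_eq _ (t := biexp a (b + 1))
        (by rw [biexp_add_biexp]; congr 1 <;> omega)] at h
    have hnext : coeff (biexp (a + 1) b) R = 0 := by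
      by_cases ha' : a + 1 ≤ m
      · exact ih (by omega) _ ha'
      · by_contra hne
        have := monomial_le_degreeOf 0 (mem_support_iff.2 hne)
        simp only [biexp_apply_zero] at this
        omega
    rw [hnext, mul_zero, zero_add] at h
    simp only [biexp_apply_zero, biexp_apply_one, mul_eq_zero, Nat.cast_eq_zero,
      Nat.descFactorial_eq_zero_iff_lt] at h
    exact h.resolve_left (by omega)

lemma X_pow_dvd_of_le {σ R : Type*} [CommSemiring R] {p : MvPolynomial σ R} {i : σ} {k : ℕ}
    (h : ∀ s ∈ p.support, k ≤ s i) : X i ^ k ∣ p := by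
  rw [X_pow_eq_monomial, monomial_one_dvd_iff_modMonomial_eq_zero]
  ext s
  rw [coeff_zero]
  by_cases hs : Finsupp.single i k ≤ s
  · exact coeff_modMonomial_of_le _ hs
  · rw [coeff_modMonomial_of_not_le _ hs, ← notMem_support_iff]
    exact fun hmem => hs (Finsupp.single_le_iff.2 (h s hmem))

lemma X_one_pow_dvd_of_apolar_specialForm_eq_zero {m : ℕ} {R : MvPolynomial (Fin 2) ℂ}
    (hR : apolar R (specialForm m) = 0) (hdeg : R.degreeOf 0 ≤ m) : X 1 ^ (m + 2) ∣ R := by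
  refine X_pow_dvd_of_le fun s hs => ?_
  by_contra hlt
  have := coeff_eq_zero_of_apolar_specialForm_eq_zero hR hdeg (b := s 1) (by omega) (s 0)
    (degreeOf_le_iff.1 hdeg s hs)
  rw [biexp_eta] at this
  exact mem_support_iff.1 hs this

theorem exists_eq_X_pow_add_mul_add {R : Type*} [CommRing R] [Nontrivial R] {n d : ℕ}
    {h : MvPolynomial (Fin (n + 1)) R} (hh : h.degreeOf 0 < d) (f : MvPolynomial (Fin (n + 1)) R) :
    ∃ q r, f = (X 0 ^ d + h) * q + r ∧ r.degreeOf 0 < d := by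
  have hmonic : (finSuccEquiv R n (X 0 ^ d + h)).Monic := by
    rw [map_add, map_pow, finSuccEquiv_X_zero]
    refine Polynomial.monic_X_pow_add ((Polynomial.degree_le_natDegree).trans_lt ?_)
    rw [natDegree_finSuccEquiv]
    exact_mod_cast hh
  have hdeg : (finSuccEquiv R n (X 0 ^ d + h)).natDegree = d := by
    rw [natDegree_finSuccEquiv, degreeOf_add_eq_of_degreeOf_lt] <;> rw [degreeOf_X_self_pow]
    exact hh
  generalize X 0 ^ d + h = g at hmonic hdeg
  set φ := finSuccEquiv R n
  refine ⟨φ.symm (φ f /ₘ φ g), φ.symm (φ f %ₘ φ g), φ.injective ?_, ?_⟩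
  · rw [map_add, map_mul, AlgEquiv.apply_symm_apply, AlgEquiv.apply_symm_apply]
    exact ((add_comm _ _).trans (Polynomial.modByMonic_add_div _ _)).symm
  · rw [← natDegree_finSuccEquiv, AlgEquiv.apply_symm_apply, ← hdeg]
    refine Polynomial.natDegree_modByMonic_lt _ hmonic fun h1 => ?_
    rw [h1, Polynomial.natDegree_one] at hdeg
    omega

lemma exists_altForm_eq_X_pow_add (m : ℕ) :
    ∃ h : MvPolynomial (Fin 2) ℂ, h.degreeOf 0 < m + 1 ∧ altForm m = X 0 ^ (m + 1) + h := by
  refine ⟨∑ k ∈ Finset.range (m + 1), (-1 : ℂ) ^ (k + 1) • (X 0 ^ (m - k) * X 1 ^ (k + 1)),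
    Nat.lt_succ_iff.2 ((degreeOf_sum_le _ _ _).trans (Finset.sup_le fun k _ => ?_)), ?_⟩
  · rw [smul_eq_C_mul]
    refine (degreeOf_C_mul_le _ _ _).trans ?_
    rw [degreeOf_mul_X_pow_of_ne _ (by decide), degreeOf_X_self_pow]
    exact Nat.sub_le m k
  · rw [altForm, Finset.sum_range_succ', add_comm]
    simp

theorem annIdeal_specialForm (m : ℕ) :
    annIdeal (specialForm m) = Ideal.span {altForm m, X 1 ^ (m + 2)} := by
  have hAlt : altForm m ∈ annIdeal (specialForm m) := apolar_altForm_specialForm m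
  refine le_antisymm (fun Q hQ => ?_) ?_
  · obtain ⟨h, hh, hG⟩ := exists_altForm_eq_X_pow_add m
    obtain ⟨q, r, rfl, hr⟩ := exists_eq_X_pow_add_mul_add hh Q
    rw [← hG] at hQ ⊢
    have hr0 : r ∈ annIdeal (specialForm m) := by
      simpa using Ideal.sub_mem _ hQ (Ideal.mul_mem_right q _ hAlt)
    obtain ⟨c, rfl⟩ := X_one_pow_dvd_of_apolar_specialForm_eq_zero hr0 (Nat.lt_succ_iff.1 hr)
    exact Ideal.add_mem _ (Ideal.mul_mem_right _ _ (Ideal.subset_span (by simp)))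
      (Ideal.mul_mem_right _ _ (Ideal.subset_span (by simp)))
  · rw [Ideal.span_le, Set.insert_subset_iff, Set.singleton_subset_iff]
    exact ⟨hAlt, apolar_X_one_pow_specialForm m⟩

lemma exists_ne_zero_isHomogeneous_one_eval_eq_zero (c : Fin 2 → ℂ) :
    ∃ μ : MvPolynomial (Fin 2) ℂ, μ ≠ 0 ∧ μ.IsHomogeneous 1 ∧ eval c μ = 0 := by
  by_cases hc : c = 0
  · exact ⟨X 0, X_ne_zero _, isHomogeneous_X _ _, by simp [hc]⟩
  refine ⟨C (c 1) * X 0 - C (c 0) * X 1, fun h0 => hc ?_,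
    (isHomogeneous_C_mul_X _ _).sub (isHomogeneous_C_mul_X _ _), by simp [mul_comm]⟩
  have h1 := congrArg (coeff (Finsupp.single 0 1)) h0
  have h2 := congrArg (coeff (Finsupp.single 1 1)) h0
  simp [coeff_X, Finsupp.single_eq_single_iff] at h1 h2
  ext i
  fin_cases i <;> simp [h1, h2]

lemma pderiv_eq_C_of_isHomogeneous_one {L : MvPolynomial (Fin 2) ℂ} (hL : L.IsHomogeneous 1)
    (i : Fin 2) : pderiv i L = C (coeff 0 (pderiv i L)) :=
  totalDegree_eq_zero_iff_eq_C.1 ((totalDegree_zero_iff_isHomogeneous _).2 hL.pderiv)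

lemma exists_apolar_pow_eq_zero_of_isHomogeneous_one {L : MvPolynomial (Fin 2) ℂ}
    (hL : L.IsHomogeneous 1) :
    ∃ μ : MvPolynomial (Fin 2) ℂ, μ ≠ 0 ∧ μ.IsHomogeneous 1 ∧ ∀ n, apolar μ (L ^ n) = 0 := by
  obtain ⟨μ, hμ0, hμ, hev⟩ :=
    exists_ne_zero_isHomogeneous_one_eval_eq_zero fun i => coeff 0 (pderiv i L)
  refine ⟨μ, hμ0, hμ, fun n => ?_⟩
  rw [apolar_pow_of_isHomogeneous (pderiv_eq_C_of_isHomogeneous_one hL) hμ, hev, mul_zero,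
    zero_smul]

lemma succ_le_of_specialForm_eq_sum_pow {m r : ℕ} (lam : Fin r → MvPolynomial (Fin 2) ℂ)
    (hlam : ∀ i, (lam i).IsHomogeneous 1) (hP : specialForm m = ∑ i, lam i ^ (2 * m + 1)) :
    m + 1 ≤ r := by
  by_contra! hr
  choose μ hμ0 hμ hann using fun i => exists_apolar_pow_eq_zero_of_isHomogeneous_one (hlam i)
  have hM0 : ∏ i, μ i ≠ 0 := Finset.prod_ne_zero_iff.2 fun i _ => hμ0 i
  have hMdeg : (∏ i, μ i).totalDegree = r := by
    simpa using (IsHomogeneous.prod _ _ _ fun i _ => hμ i).totalDegree hM0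
  have hMann : apolar (∏ i, μ i) (specialForm m) = 0 := by
    rw [hP, apolar, map_sum]
    refine Finset.sum_eq_zero fun i _ => ?_
    rw [← Finset.prod_erase_mul _ _ (Finset.mem_univ i)]
    exact Ideal.mul_mem_left (annIdeal _) _ (hann i _)
  obtain ⟨c, hc⟩ := X_one_pow_dvd_of_apolar_specialForm_eq_zero hMann
    ((degreeOf_le_totalDegree _ _).trans (by omega))
  have hc0 : c ≠ 0 := by rintro rfl; exact hM0 (by simpa using hc)
  rw [hc, totalDegree_mul_of_isDomain (pow_ne_zero _ (X_ne_zero _)) hc0, totalDegree_X_pow] at hMdeg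
  omega

lemma exists_specialForm_eq_sum_pow (m : ℕ) :
    ∃ lam : Fin (m + 1) → MvPolynomial (Fin 2) ℂ,
      (∀ i, (lam i).IsHomogeneous 1) ∧ specialForm m = ∑ i, lam i ^ (2 * m + 1) := by
  obtain ⟨ω, hω⟩ : ∃ ω : ℂ, IsPrimitiveRoot ω (m + 2) :=
    ⟨_, Complex.isPrimitiveRoot_exp _ (by omega)⟩
  choose z hz using fun j : ℕ => IsAlgClosed.exists_pow_nat_eq (waringWeight m ω (j + 1))
    (Nat.succ_pos (2 * m))
  refine ⟨fun i => C (z i) * (C (ω ^ (i.1 + 1)) * X 0 - X 1), fun i => ?_, ?_⟩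
  · simpa using (isHomogeneous_C _ (z i)).mul
      ((isHomogeneous_C_mul_X (ω ^ (i.1 + 1)) 0).sub (isHomogeneous_X ℂ 1))
  · rw [specialForm_eq_sum_smul_pow hω, ← Fin.sum_univ_eq_sum_range]
    simp_rw [mul_pow, ← C_pow, hz, smul_eq_C_mul]

theorem waringRank_specialForm (m : ℕ) : waringRank (2 * m + 1) (specialForm m) = m + 1 := by
  obtain ⟨lam, hlam, hP⟩ := exists_specialForm_eq_sum_pow m
  exact le_antisymm (Nat.sInf_le ⟨lam, hlam, hP⟩)
    (le_csInf ⟨_, lam, hlam, hP⟩ fun r ⟨lam', hlam', hP'⟩ =>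
      succ_le_of_specialForm_eq_sum_pow lam' hlam' hP')

theorem ann_special_general (m : ℕ) :
    annIdeal ((X 0 : MvPolynomial (Fin 2) ℂ) ^ m * X 1 ^ m * (X 0 + X 1))
        = Ideal.span
          {∑ k ∈ Finset.range (m + 2),
              (-1 : ℂ) ^ k • ((X 0 : MvPolynomial (Fin 2) ℂ) ^ (m + 1 - k) * X 1 ^ k),
            (X 1 : MvPolynomial (Fin 2) ℂ) ^ (m + 2)} ∧
      waringRank (2 * m + 1) ((X 0 : MvPolynomial (Fin 2) ℂ) ^ m * X 1 ^ m * (X 0 + X 1))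
        = m + 1 :=
  ⟨annIdeal_specialForm m, waringRank_specialForm m⟩

/-- For `m ≥ 1` and `P = X₀^m X₁^m (X₀ + X₁)`:
`Ann(P) = (∑_{k=0}^{m+1} (−1)^k X₀^{m+1−k} X₁^k, X₁^{m+2})` and `rk(P) = m + 1`. -/
theorem ann_special (m : ℕ) (hm : 1 ≤ m) :
    annIdeal ((X 0 : MvPolynomial (Fin 2) ℂ) ^ m * X 1 ^ m * (X 0 + X 1))
        = Ideal.span
          {∑ k ∈ Finset.range (m + 2),
              (-1 : ℂ) ^ k • ((X 0 : MvPolynomial (Fin 2) ℂ) ^ (m + 1 - k) * X 1 ^ k),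
            (X 1 : MvPolynomial (Fin 2) ℂ) ^ (m + 2)} ∧
      waringRank (2 * m + 1) ((X 0 : MvPolynomial (Fin 2) ℂ) ^ m * X 1 ^ m * (X 0 + X 1))
        = m + 1 :=
  ann_special_general m
end
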